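/- arXiv:2110.07530 — 2 statements merged into one kernel-verified Lean document; each statement's English description precedes it below -/
import Mathlib

section
/- Let a, b ∈ ℝ, r ≥ 2 and k ≥ 0. Let T_k : ℝ → [−k,k] be the truncation T_k(t) = −k for t ≤ −k, T_k(t) = t for t ∈ (−k,k), T_k(t) = k for t ≥ k, and write a_k := T_k(a), b_k := T_k(b). Then (4(r−1)/r²)·(|a_k|^{r/2} − |b_k|^{r/2})² ≤ (a−b)·(a_k|a_k|^{r−2} − b_k|b_k|^{r−2}). -/
open MeasureTheory Filter Topology

noncomputable section

/-- Euclidean space ℝ^N. -/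
abbrev RN (N : ℕ) : Type := EuclideanSpace ℝ (Fin N)

/-- The squared Gagliardo seminorm [u]_s². -/
def gagliardoSq (N : ℕ) (s : ℝ) (u : RN N → ℝ) : ℝ :=
  ∫ x : RN N, ∫ y : RN N, (u x - u y) ^ 2 / dist x y ^ ((N : ℝ) + 2 * s)

/-- Membership in the fractional Sobolev space H^s(ℝ^N):
u ∈ L² and the Gagliardo integrand is integrable (i.e. [u]_s < ∞). -/
def memHs (N : ℕ) (s : ℝ) (u : RN N → ℝ) : Prop :=
  MemLp u 2 (volume : Measure (RN N)) ∧
    Integrable (fun p : RN N × RN N =>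
      (u p.1 - u p.2) ^ 2 / dist p.1 p.2 ^ ((N : ℝ) + 2 * s))
      ((volume : Measure (RN N)).prod volume)

/-- The fractional Dirichlet form E(u,φ) with normalizing constant CNs = C(N,s). -/
def dForm (N : ℕ) (s CNs : ℝ) (u φ : RN N → ℝ) : ℝ :=
  CNs * ∫ x : RN N, ∫ y : RN N,
    (u x - u y) * (φ x - φ y) / dist x y ^ ((N : ℝ) + 2 * s)

/-- The constant A_{N,α} of the Riesz potential. -/
def rieszConst (N : ℕ) (α : ℝ) : ℝ :=
  Real.Gamma (((N : ℝ) - α) / 2) /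
    ((2 : ℝ) ^ α * Real.pi ^ ((N : ℝ) / 2) * Real.Gamma (α / 2))

/-- The Riesz potential (I_α ∗ g)(x). -/
def riesz (N : ℕ) (α : ℝ) (g : RN N → ℝ) (x : RN N) : ℝ :=
  rieszConst N α * ∫ y : RN N, g y * dist x y ^ (α - (N : ℝ))

/-- F(t) := ∫₀ᵗ f(τ) dτ. -/
def primitive (f : ℝ → ℝ) (t : ℝ) : ℝ := ∫ τ in (0:ℝ)..t, f τ

/-- Radially symmetric function on ℝ^N. -/
def radialFn (N : ℕ) (u : RN N → ℝ) : Prop :=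
  ∀ x y : RN N, ‖x‖ = ‖y‖ → u x = u y

/-- (f1): f is continuous. -/
def Cond1 (f : ℝ → ℝ) : Prop := Continuous f

/-- (f2): limsup_{t→0} |t f(t)|/|t|^{(N+α)/N} < ∞ and
limsup_{|t|→∞} |t f(t)|/|t|^{(N+α)/(N-2s)} < ∞. -/
def Cond2 (N : ℕ) (s α : ℝ) (f : ℝ → ℝ) : Prop :=
  (∃ C : ℝ, ∀ᶠ t : ℝ in 𝓝[≠] 0, |t * f t| ≤ C * |t| ^ (((N : ℝ) + α) / N)) ∧
  (∃ C M : ℝ, ∀ t : ℝ, M ≤ |t| → |t * f t| ≤ C * |t| ^ (((N : ℝ) + α) / ((N : ℝ) - 2 * s)))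

/-- (f3): lim_{t→0} F(t)/|t|^{(N+α)/N} = 0 and lim_{|t|→∞} F(t)/|t|^{(N+α)/(N-2s)} = 0. -/
def Cond3 (N : ℕ) (s α : ℝ) (f : ℝ → ℝ) : Prop :=
  Tendsto (fun t : ℝ => primitive f t / |t| ^ (((N : ℝ) + α) / N)) (𝓝[≠] 0) (𝓝 0) ∧
  Tendsto (fun t : ℝ => primitive f t / |t| ^ (((N : ℝ) + α) / ((N : ℝ) - 2 * s)))
    (atBot ⊔ atTop) (𝓝 0)

/-- (f4): there is t₀ ≠ 0 with F(t₀) ≠ 0. -/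
def Cond4 (f : ℝ → ℝ) : Prop := ∃ t₀ : ℝ, t₀ ≠ 0 ∧ primitive f t₀ ≠ 0

/-- (f5): limsup_{t→0} |t f(t)|/t² < ∞. -/
def Cond5 (f : ℝ → ℝ) : Prop := ∃ C : ℝ, ∀ᶠ t : ℝ in 𝓝[≠] (0:ℝ), |t * f t| ≤ C * t ^ 2

/-- u is a weak solution of (−Δ)^s u + μ u = (I_α∗F(u)) f(u), tested against all of H^s. -/
def weakSol (N : ℕ) (s CNs α μ : ℝ) (f : ℝ → ℝ) (u : RN N → ℝ) : Prop :=
  ∀ φ : RN N → ℝ, memHs N s φ →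
    dForm N s CNs u φ + μ * ∫ x : RN N, u x * φ x =
      ∫ x : RN N, riesz N α (fun y => primitive f (u y)) x * f (u x) * φ x
/-- The nonlocal term D(u) = ∫ (I_α∗F(u)) F(u). -/
def Dnl (N : ℕ) (α : ℝ) (f : ℝ → ℝ) (u : RN N → ℝ) : ℝ :=
  ∫ x : RN N, riesz N α (fun y => primitive f (u y)) x * primitive f (u x)

/-- The action functional J_μ. -/
def Jfun (N : ℕ) (s CNs α μ : ℝ) (f : ℝ → ℝ) (u : RN N → ℝ) : ℝ :=
  CNs / 2 * gagliardoSq N s u + μ / 2 * (∫ x : RN N, (u x) ^ 2) - Dnl N α f u / 2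

/-- The Pohozaev functional P_μ. -/
def Pfun (N : ℕ) (s CNs α μ : ℝ) (f : ℝ → ℝ) (u : RN N → ℝ) : ℝ :=
  ((N : ℝ) - 2 * s) / 2 * CNs * gagliardoSq N s u
    + (N : ℝ) / 2 * μ * (∫ x : RN N, (u x) ^ 2)
    - ((N : ℝ) + α) / 2 * Dnl N α f u

/-- The squared H^s norm, used to express continuity of paths in H^s. -/
def hsNormSq (N : ℕ) (s : ℝ) (u : RN N → ℝ) : ℝ :=
  (∫ x : RN N, (u x) ^ 2) + gagliardoSq N s u

/-- u is a critical point of J_μ on H^s_r: the Euler–Lagrange equation holds for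
all radial test functions in H^s. -/
def critPt (N : ℕ) (s CNs α μ : ℝ) (f : ℝ → ℝ) (u : RN N → ℝ) : Prop :=
  ∀ φ : RN N → ℝ, memHs N s φ → radialFn N φ →
    dForm N s CNs u φ + μ * ∫ x : RN N, u x * φ x =
      ∫ x : RN N, riesz N α (fun y => primitive f (u y)) x * f (u x) * φ x

/-- The set Γ_μ of admissible paths: continuous paths in H^s_r(ℝ^N) with γ(0)=0
and J_μ(γ(1)) < 0. -/
def pathSet (N : ℕ) (s CNs α μ : ℝ) (f : ℝ → ℝ) : Set (ℝ → RN N → ℝ) :=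
  { γ | (∀ t ∈ Set.Icc (0:ℝ) 1, memHs N s (γ t) ∧ radialFn N (γ t)) ∧
        (∀ t ∈ Set.Icc (0:ℝ) 1, ∀ ε > (0:ℝ), ∃ δ > (0:ℝ), ∀ t' ∈ Set.Icc (0:ℝ) 1,
            |t' - t| < δ → hsNormSq N s (fun x => γ t' x - γ t x) < ε) ∧
        γ 0 = 0 ∧ Jfun N s CNs α μ f (γ 1) < 0 }

/-- The Mountain Pass value l(μ). -/
def MPlevel (N : ℕ) (s CNs α μ : ℝ) (f : ℝ → ℝ) : ℝ :=
  sInf { c | ∃ γ ∈ pathSet N s CNs α μ f,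
      c = sSup ((fun t => Jfun N s CNs α μ f (γ t)) '' Set.Icc (0:ℝ) 1) }

/-- The Pohozaev least energy level p(μ). -/
def PohozaevLevel (N : ℕ) (s CNs α μ : ℝ) (f : ℝ → ℝ) : ℝ :=
  sInf { c | ∃ u : RN N → ℝ, memHs N s u ∧ radialFn N u ∧
      ¬ u =ᵐ[(volume : Measure (RN N))] 0 ∧
      Pfun N s CNs α μ f u = 0 ∧ c = Jfun N s CNs α μ f u }

/-- Membership in the sum space L^p(ℝ^N) + L^q(ℝ^N) (real exponents p,q). -/
def inSumLp (N : ℕ) (p q : ℝ) (H : RN N → ℝ) : Prop :=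
  ∃ H₁ H₂ : RN N → ℝ, MemLp H₁ (ENNReal.ofReal p) (volume : Measure (RN N)) ∧
    MemLp H₂ (ENNReal.ofReal q) (volume : Measure (RN N)) ∧ H = H₁ + H₂

/-- Truncation at level k. -/
def trunc (k t : ℝ) : ℝ := max (-k) (min t k)

/-!
For `0 < y ≤ x` write `x = exp (m + d)`, `y = exp (m - d)`, so that
`x ^ t - y ^ t = 2 exp (t m) sinh (t d)`. With `A = r d / 2` and `μ = (r - 2) / r` the
inequality becomes `(1 - μ²) sinh² A ≤ sinh (A + μ A) sinh (A - μ A) = sinh² A - sinh² (μ A)`,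
which holds because `sinh (μ A) ≤ μ sinh A` (convexity of `sinh` on `[0, ∞)`); note
`4 (r - 1) / r² = 1 - μ²`. When the signs of the two points differ, the left side is at most
`|a| ^ r + |b| ^ r`, which is at most the right side. Finally, a monotone `1`-Lipschitz map `T`
such as the truncation satisfies `0 ≤ T a - T b ≤ a - b` for `b ≤ a`, and the second factor
on the right is nonnegative since `t ↦ t |t| ^ (r - 2)` is monotone.
-/

open Real

namespace Real

lemma sinh_mul_le_mul_sinh {μ u : ℝ} (hμ₀ : 0 ≤ μ) (hμ₁ : μ ≤ 1) (hu : 0 ≤ u) :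
    sinh (μ * u) ≤ μ * sinh u := by
  have hderiv (x : ℝ) : HasDerivAt (fun x => μ * sinh x - sinh (μ * x))
      (μ * cosh x - cosh (μ * x) * μ) x :=
    ((hasDerivAt_sinh x).const_mul μ).sub
      ((hasDerivAt_sinh (μ * x)).comp x (by simpa using (hasDerivAt_id x).const_mul μ))
  have hmono : Monotone (fun x => μ * sinh x - sinh (μ * x)) := by
    refine monotone_of_deriv_nonneg (fun x => (hderiv x).differentiableAt) fun x => ?_
    have hcosh : cosh (μ * x) ≤ cosh x := by
      rw [cosh_le_cosh, abs_mul, abs_of_nonneg hμ₀]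
      exact mul_le_of_le_one_left (abs_nonneg x) hμ₁
    rw [(hderiv x).deriv]
    nlinarith
  simpa using hmono hu

lemma sinh_add_mul_sinh_sub (A B : ℝ) :
    sinh (A + B) * sinh (A - B) = sinh A ^ 2 - sinh B ^ 2 := by
  rw [sinh_add, sinh_sub]
  linear_combination sinh A ^ 2 * cosh_sq B - sinh B ^ 2 * cosh_sq A

lemma four_mul_sub_one_div_sq_mul_sinh_sq_le {r d : ℝ} (hr : 2 ≤ r) (hd : 0 ≤ d) :
    4 * (r - 1) / r ^ 2 * sinh (r / 2 * d) ^ 2 ≤ sinh d * sinh ((r - 1) * d) := by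
  have hr₀ : 0 < r := by linarith
  set μ := (r - 2) / r
  set A := r / 2 * d
  have hμ₀ : 0 ≤ μ := div_nonneg (by linarith) hr₀.le
  have hA : 0 ≤ A := by positivity
  have hB : sinh (μ * A) ≤ μ * sinh A :=
    sinh_mul_le_mul_sinh hμ₀ ((div_le_one hr₀).2 (by linarith)) hA
  have hB₀ : 0 ≤ sinh (μ * A) := sinh_nonneg_iff.2 (mul_nonneg hμ₀ hA)
  have hsum : (r - 1) * d = A + μ * A := by simp only [μ, A]; field_simp; ring
  have hdiff : d = A - μ * A := by simp only [μ, A]; field_simp; ring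
  have hconst : 4 * (r - 1) / r ^ 2 = 1 - μ ^ 2 := by simp only [μ]; field_simp; ring
  rw [hconst, hsum, hdiff, mul_comm (sinh (A - μ * A)), sinh_add_mul_sinh_sub]
  nlinarith [mul_le_mul hB hB hB₀ (mul_nonneg hμ₀ (sinh_nonneg_iff.2 hA))]

lemma rpow_sub_rpow_eq_two_mul_exp_mul_sinh {x y : ℝ} (hx : 0 < x) (hy : 0 < y) (t : ℝ) :
    x ^ t - y ^ t =
      2 * exp (t * ((log x + log y) / 2)) * sinh (t * ((log x - log y) / 2)) := by
  rw [rpow_def_of_pos hx, rpow_def_of_pos hy, sinh_eq, mul_div_assoc', mul_sub, mul_assoc,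
    mul_assoc, ← exp_add, ← exp_add]
  ring_nf

end Real

lemma four_mul_sub_one_div_sq_le_one (r : ℝ) : 4 * (r - 1) / r ^ 2 ≤ 1 :=
  div_le_one_of_le₀ (by nlinarith [sq_nonneg (r - 2)]) (sq_nonneg r)

lemma mul_rpow_sub_one {x p : ℝ} (hx : 0 ≤ x) (hp : p ≠ 0) : x * x ^ (p - 1) = x ^ p := by
  rw [← rpow_one_add' hx (by simpa using hp)]
  ring_nf

lemma mul_rpow_sub_two {x r : ℝ} (hx : 0 ≤ x) (hr : r ≠ 1) : x * x ^ (r - 2) = x ^ (r - 1) := by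
  rw [show r - 2 = r - 1 - 1 by ring, mul_rpow_sub_one hx (sub_ne_zero.2 hr)]

lemma rpow_div_two_sq {x : ℝ} (hx : 0 ≤ x) (r : ℝ) : (x ^ (r / 2)) ^ 2 = x ^ r := by
  rw [← rpow_mul_natCast hx]
  ring_nf

lemma four_mul_sub_one_div_sq_mul_rpow_sub_sq_le {r x y : ℝ} (hr : 2 ≤ r) (hy : 0 ≤ y)
    (hyx : y ≤ x) :
    4 * (r - 1) / r ^ 2 * (x ^ (r / 2) - y ^ (r / 2)) ^ 2 ≤
      (x - y) * (x ^ (r - 1) - y ^ (r - 1)) := by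
  rcases hy.eq_or_lt with rfl | hy
  · have hx : 0 ≤ x := hyx
    rw [zero_rpow (by linarith), zero_rpow (by linarith), sub_zero, sub_zero, sub_zero,
      rpow_div_two_sq hx, mul_rpow_sub_one hx (by linarith)]
    exact mul_le_of_le_one_left (rpow_nonneg hx r) (four_mul_sub_one_div_sq_le_one r)
  have hx : 0 < x := hy.trans_le hyx
  set m := (log x + log y) / 2
  set d := (log x - log y) / 2
  have hd : 0 ≤ d := by have := log_le_log hy hyx; simp only [d]; linarith
  have hexp_sq : exp (r / 2 * m) ^ 2 = exp (r * m) := by rw [sq, ← exp_add]; ring_nf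
  have hexp_mul : exp m * exp ((r - 1) * m) = exp (r * m) := by rw [← exp_add]; ring_nf
  have hxy : x - y = 2 * exp m * sinh d := by
    simpa using rpow_sub_rpow_eq_two_mul_exp_mul_sinh hx hy 1
  rw [hxy, rpow_sub_rpow_eq_two_mul_exp_mul_sinh hx hy,
    rpow_sub_rpow_eq_two_mul_exp_mul_sinh hx hy]
  calc _ = 4 * exp (r * m) * (4 * (r - 1) / r ^ 2 * sinh (r / 2 * d) ^ 2) := by
          rw [← hexp_sq]; ring
    _ ≤ 4 * exp (r * m) * (sinh d * sinh ((r - 1) * d)) := by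
          gcongr ?_ * ?_
          exact four_mul_sub_one_div_sq_mul_sinh_sq_le hr hd
    _ = _ := by rw [← hexp_mul]; ring

lemma four_mul_sub_one_div_sq_mul_abs_rpow_sub_sq_le {r a b : ℝ} (hr : 2 ≤ r) (hba : b ≤ a) :
    4 * (r - 1) / r ^ 2 * (|a| ^ (r / 2) - |b| ^ (r / 2)) ^ 2 ≤
      (a - b) * (a * |a| ^ (r - 2) - b * |b| ^ (r - 2)) := by
  have hr₁ : r ≠ 1 := by linarith
  have of_nonneg {x y : ℝ} (hy : 0 ≤ y) (hyx : y ≤ x) :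
      4 * (r - 1) / r ^ 2 * (|x| ^ (r / 2) - |y| ^ (r / 2)) ^ 2 ≤
        (x - y) * (x * |x| ^ (r - 2) - y * |y| ^ (r - 2)) := by
    have hx : 0 ≤ x := hy.trans hyx
    rw [abs_of_nonneg hx, abs_of_nonneg hy, mul_rpow_sub_two hx hr₁, mul_rpow_sub_two hy hr₁]
    exact four_mul_sub_one_div_sq_mul_rpow_sub_sq_le hr hy hyx
  rcases le_total 0 b with hb | hb
  · exact of_nonneg hb hba
  rcases le_total a 0 with ha | ha
  · have h := of_nonneg (neg_nonneg.2 ha) (neg_le_neg hba)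
    simp only [abs_neg] at h
    linear_combination h
  obtain ⟨y, hy, rfl⟩ : ∃ y, 0 ≤ y ∧ b = -y := ⟨-b, neg_nonneg.2 hb, (neg_neg b).symm⟩
  rw [abs_neg, abs_of_nonneg ha, abs_of_nonneg hy]
  have hXY := mul_nonneg (rpow_nonneg ha (r / 2)) (rpow_nonneg hy (r / 2))
  calc _ ≤ (a ^ (r / 2) - y ^ (r / 2)) ^ 2 :=
        mul_le_of_le_one_left (sq_nonneg _) (four_mul_sub_one_div_sq_le_one r)
    _ ≤ (a ^ (r / 2)) ^ 2 + (y ^ (r / 2)) ^ 2 := by nlinarith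
    _ = a * a ^ (r - 1) + y * y ^ (r - 1) := by
        rw [rpow_div_two_sq ha, rpow_div_two_sq hy, mul_rpow_sub_one ha (by linarith),
          mul_rpow_sub_one hy (by linarith)]
    _ ≤ (a - -y) * (a * a ^ (r - 2) - -y * y ^ (r - 2)) := by
        rw [mul_rpow_sub_two ha hr₁, neg_mul, mul_rpow_sub_two hy hr₁]
        nlinarith [mul_nonneg ha (rpow_nonneg hy (r - 1)), mul_nonneg hy (rpow_nonneg ha (r - 1))]

lemma monotone_mul_abs_rpow {r : ℝ} (hr : 2 ≤ r) : Monotone fun x : ℝ => x * |x| ^ (r - 2) := by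
  intro x y hxy
  rcases hxy.eq_or_lt with rfl | hlt
  · exact le_rfl
  have h := (mul_nonneg (div_nonneg (by linarith) (sq_nonneg r)) (sq_nonneg _)).trans
    (four_mul_sub_one_div_sq_mul_abs_rpow_sub_sq_le hr hxy)
  exact sub_nonneg.1 ((mul_nonneg_iff_of_pos_left (sub_pos.2 hlt)).1 h)

lemma four_mul_sub_one_div_sq_mul_abs_rpow_comp_sub_sq_le {T : ℝ → ℝ} (hT : Monotone T)
    (hT₁ : LipschitzWith 1 T) {r a b : ℝ} (hr : 2 ≤ r) (hba : b ≤ a) :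
    4 * (r - 1) / r ^ 2 * (|T a| ^ (r / 2) - |T b| ^ (r / 2)) ^ 2 ≤
      (a - b) * (T a * |T a| ^ (r - 2) - T b * |T b| ^ (r - 2)) := by
  have hTba : T b ≤ T a := hT hba
  have hshrink : T a - T b ≤ a - b := by
    have := hT₁.dist_le_mul a b
    rw [NNReal.coe_one, one_mul, Real.dist_eq, Real.dist_eq, abs_of_nonneg (sub_nonneg.2 hTba),
      abs_of_nonneg (sub_nonneg.2 hba)] at this
    exact this
  exact (four_mul_sub_one_div_sq_mul_abs_rpow_sub_sq_le hr hTba).trans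
    (mul_le_mul_of_nonneg_right hshrink (sub_nonneg.2 (monotone_mul_abs_rpow hr hTba)))

lemma monotone_trunc (k : ℝ) : Monotone (trunc k) :=
  fun _ _ h => max_le_max le_rfl (min_le_min h le_rfl)

lemma lipschitzWith_trunc (k : ℝ) : LipschitzWith 1 (trunc k) :=
  (LipschitzWith.id.min_const k).const_max (-k)

theorem statement9_general (a b r k : ℝ) (hr : 2 ≤ r) :
    4 * (r - 1) / r ^ 2 *
        (|trunc k a| ^ (r / 2) - |trunc k b| ^ (r / 2)) ^ 2 ≤
      (a - b) *
        (trunc k a * |trunc k a| ^ (r - 2) - trunc k b * |trunc k b| ^ (r - 2)) := by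
  rcases le_total b a with hba | hab
  · exact four_mul_sub_one_div_sq_mul_abs_rpow_comp_sub_sq_le (monotone_trunc k)
      (lipschitzWith_trunc k) hr hba
  · linear_combination four_mul_sub_one_div_sq_mul_abs_rpow_comp_sub_sq_le (monotone_trunc k)
      (lipschitzWith_trunc k) hr hab

/-- the elementary truncation inequality. -/
theorem statement9 (a b r k : ℝ) (hr : 2 ≤ r) (hk : 0 ≤ k) :
    4 * (r - 1) / r ^ 2 *
        (|trunc k a| ^ (r / 2) - |trunc k b| ^ (r / 2)) ^ 2 ≤
      (a - b) *
        (trunc k a * |trunc k a| ^ (r - 2) - trunc k b * |trunc k b| ^ (r - 2)) :=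
  statement9_general a b r k hr
end
end

section
/- Let N ≥ 2, s ∈ (0,1), a > 0 and Σ ⊂ ℝ^N a measurable set (possibly unbounded). Let u ∈ H^s(ℝ^N) be a weak subsolution of (−Δ)^s u + a u ≤ 0 in ℝ^N ∖ Σ, in the sense that E(u,φ) + a∫uφ ≤ 0 for every nonnegative φ ∈ H^s(ℝ^N) with support contained in ℝ^N ∖ Σ. If u ≤ 0 almost everywhere on Σ, then u ≤ 0 almost everywhere on ℝ^N. -/
open MeasureTheory Filter Topology

noncomputable section

/-! Test the subsolution inequality with the positive part u⁺, cut off on Σ (where it vanishes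
a.e. anyway). Since t ↦ max t 0 is monotone, (u x − u y)(u⁺ x − u⁺ y) ≥ 0, so E(u, u⁺) ≥ 0, while
∫ u u⁺ = ∫ (u⁺)². Hence a ∫ (u⁺)² ≤ 0, and u⁺ = 0 a.e. -/

lemma mul_sub_nonneg_of_monotone {f : ℝ → ℝ} (hf : Monotone f) (a b : ℝ) :
    0 ≤ (a - b) * (f a - f b) := by
  rcases le_total a b with h | h
  · exact mul_nonneg_of_nonpos_of_nonpos (sub_nonpos.2 h) (sub_nonpos.2 (hf h))
  · exact mul_nonneg (sub_nonneg.2 h) (sub_nonneg.2 (hf h))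

lemma mul_max_zero_eq_sq (t : ℝ) : t * max t 0 = max t 0 ^ 2 := by
  rcases le_total t 0 with h | h <;> simp [h, sq]

section

variable {N : ℕ} {s : ℝ}

lemma memHs.congr_ae {u v : RN N → ℝ} (hu : memHs N s u) (huv : u =ᵐ[volume] v) :
    memHs N s v := by
  refine ⟨hu.1.ae_eq huv, hu.2.congr ?_⟩
  have h₁ := (Measure.quasiMeasurePreserving_fst (μ := volume)
    (ν := (volume : Measure (RN N)))).ae_eq_comp huv
  have h₂ := (Measure.quasiMeasurePreserving_snd (μ := (volume : Measure (RN N)))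
    (ν := volume)).ae_eq_comp huv
  filter_upwards [h₁, h₂] with p hp₁ hp₂
  simp only [Function.comp_apply] at hp₁ hp₂
  rw [hp₁, hp₂]

lemma memHs.of_contraction {u v : RN N → ℝ} (hu : memHs N s u)
    (hv : AEStronglyMeasurable v volume) (hvu : ∀ x, |v x| ≤ |u x|)
    (hdiff : ∀ x y, |v x - v y| ≤ |u x - u y|) : memHs N s v := by
  refine ⟨hu.1.of_le hv (.of_forall fun x => by simpa only [Real.norm_eq_abs] using hvu x), ?_⟩
  have hv₁ := hv.comp_quasiMeasurePreserving
    (Measure.quasiMeasurePreserving_fst (μ := volume) (ν := (volume : Measure (RN N))))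
  have hv₂ := hv.comp_quasiMeasurePreserving
    (Measure.quasiMeasurePreserving_snd (μ := (volume : Measure (RN N))) (ν := volume))
  have hdist : Measurable fun p : RN N × RN N => dist p.1 p.2 ^ ((N : ℝ) + 2 * s) :=
    continuous_dist.measurable.pow_const _
  refine hu.2.mono
    (((hv₁.aemeasurable.sub hv₂.aemeasurable).pow_const 2).div hdist.aemeasurable).aestronglyMeasurable
    (.of_forall fun p => ?_)
  have hd : 0 ≤ dist p.1 p.2 ^ ((N : ℝ) + 2 * s) := Real.rpow_nonneg dist_nonneg _
  simp only [Real.norm_eq_abs, abs_div, abs_of_nonneg hd, abs_sq]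
  exact div_le_div_of_nonneg_right (sq_le_sq.2 (hdiff p.1 p.2)) hd

lemma memHs.max_zero {u : RN N → ℝ} (hu : memHs N s u) : memHs N s fun x => max (u x) 0 :=
  hu.of_contraction
    (hu.1.aestronglyMeasurable.aemeasurable.max aemeasurable_const).aestronglyMeasurable
    (fun x => by rw [abs_of_nonneg (le_max_right _ _)]; exact max_le (le_abs_self _) (abs_nonneg _))
    (fun x y => abs_max_sub_max_le_abs _ _ _)

lemma dForm_congr_ae_right (CNs : ℝ) (u : RN N → ℝ) {φ ψ : RN N → ℝ}
    (h : φ =ᵐ[volume] ψ) : dForm N s CNs u φ = dForm N s CNs u ψ := by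
  unfold dForm
  congr 1
  refine integral_congr_ae ?_
  filter_upwards [h] with x hx
  refine integral_congr_ae ?_
  filter_upwards [h] with y hy
  rw [hx, hy]

lemma dForm_comp_monotone_nonneg {CNs : ℝ} (hCNs : 0 ≤ CNs) (u : RN N → ℝ) {f : ℝ → ℝ}
    (hf : Monotone f) : 0 ≤ dForm N s CNs u (f ∘ u) :=
  mul_nonneg hCNs <| integral_nonneg fun _ => integral_nonneg fun _ =>
    div_nonneg (mul_sub_nonneg_of_monotone hf _ _) (Real.rpow_nonneg dist_nonneg _)

lemma ae_nonpos_of_integral_sq_max_zero_nonpos {u : RN N → ℝ} (hu : MemLp u 2 volume)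
    (h : ∫ x, max (u x) 0 ^ 2 ≤ 0) : ∀ᵐ x ∂(volume : Measure (RN N)), u x ≤ 0 := by
  have hint : Integrable (fun x => max (u x) 0 ^ 2) volume :=
    hu.pos_part.integrable_sq
  have hzero := (integral_eq_zero_iff_of_nonneg (fun x => sq_nonneg _) hint).1
    (le_antisymm h (integral_nonneg fun x => sq_nonneg _))
  filter_upwards [hzero] with x hx
  simpa using hx

lemma indicator_compl_max_zero_ae_eq {S : Set (RN N)} {u : RN N → ℝ}
    (hS : ∀ᵐ x ∂(volume : Measure (RN N)), x ∈ S → u x ≤ 0) :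
    Sᶜ.indicator (fun x => max (u x) 0) =ᵐ[volume] fun x => max (u x) 0 := by
  filter_upwards [hS] with x hx
  by_cases hxS : x ∈ S
  · simp [hxS, hx hxS]
  · simp [hxS]

end

theorem statement15_general
    (N : ℕ) (s : ℝ)
    (CNs : ℝ) (hCNs : 0 < CNs)
    (a : ℝ) (ha : 0 < a) (S : Set (RN N))
    (u : RN N → ℝ) (hu : memHs N s u)
    (hsub : ∀ φ : RN N → ℝ, memHs N s φ → (∀ x, 0 ≤ φ x) →
      Function.support φ ⊆ Sᶜ →
      dForm N s CNs u φ + a * ∫ x : RN N, u x * φ x ≤ 0)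
    (hS : ∀ᵐ x ∂(volume : Measure (RN N)), x ∈ S → u x ≤ 0) :
    ∀ᵐ x ∂(volume : Measure (RN N)), u x ≤ 0 := by
  set v : RN N → ℝ := fun x => max (u x) 0
  have hφv := indicator_compl_max_zero_ae_eq hS
  have htest := hsub _ (hu.max_zero.congr_ae hφv.symm)
    (fun x => Set.indicator_nonneg (fun y _ => le_max_right (u y) 0) x)
    Set.support_indicator_subset
  have hdForm : 0 ≤ dForm N s CNs u v :=
    dForm_comp_monotone_nonneg hCNs.le u (f := fun t => max t 0) fun _ _ h => max_le_max h le_rfl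
  have hmass : ∫ x, u x * Sᶜ.indicator v x = ∫ x, v x ^ 2 := by
    refine integral_congr_ae ?_
    filter_upwards [hφv] with x hx
    rw [hx, mul_max_zero_eq_sq]
  rw [dForm_congr_ae_right CNs u hφv, hmass] at htest
  refine ae_nonpos_of_integral_sq_max_zero_nonpos hu.1 ?_
  exact nonpos_of_mul_nonpos_right (by linarith) ha

/-- maximum principle outside a set Σ. -/
theorem statement15
    (N : ℕ) (hN : 2 ≤ N) (s : ℝ) (hs : s ∈ Set.Ioo (0:ℝ) 1)
    (CNs : ℝ) (hCNs : 0 < CNs)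
    (a : ℝ) (ha : 0 < a) (S : Set (RN N))
    (u : RN N → ℝ) (hu : memHs N s u)
    (hsub : ∀ φ : RN N → ℝ, memHs N s φ → (∀ x, 0 ≤ φ x) →
      Function.support φ ⊆ Sᶜ →
      dForm N s CNs u φ + a * ∫ x : RN N, u x * φ x ≤ 0)
    (hS : ∀ᵐ x ∂(volume : Measure (RN N)), x ∈ S → u x ≤ 0) :
    ∀ᵐ x ∂(volume : Measure (RN N)), u x ≤ 0 :=
  statement15_general N s CNs hCNs a ha S u hu hsub hS
end
end
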